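/- Let f be a probability density on ℝ, let σ > 0, and define f_0 = f and f_{j+1} = f − (K_σ f_j − f_j) for j ≥ 0. Then for every k ∈ ℕ: (1) f_k(x) = Σ_{i=0}^k binom(k+1, i+1) (−1)^i (K_σ^i f)(x) for all x ∈ ℝ; (2) ∫_ℝ f_k(x) dx = 1; (3) if in addition f(x) ≤ M ψ(x) for all x and some M > 0, then (K_σ^i f)(x) ≤ M/√π for all i ∈ ℕ and all x, and |f_k(x)| ≤ (2^{k+1} − 1) M/√π for all x. -/

import Mathlib

/-! The closed form (1) follows by induction from Pascal's rule once `K_σ` is pulled through the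
finite sum, and (2) from `∫ K_σ g = ∫ g`. For (3), `K_σ` averages against a probability density, so
it preserves the bounds `0 ≤ g ≤ B` and `|g| ≤ B`; since `f ≤ Mψ ≤ M/√π`, the recursion
`|f_{k+1}| ≤ |f| + |K_σ f_k| + |f_k|` gives the factor `1 + 2(2^{k+1} - 1) = 2^{k+2} - 1`. -/

open MeasureTheory
open scoped Convolution

/-- The Gaussian kernel `ψ(x) = π^{-1/2} exp(-x²)`. -/
noncomputable def gaussK (x : ℝ) : ℝ := (Real.sqrt Real.pi)⁻¹ * Real.exp (-x ^ 2)

/-- The scaled Gaussian kernel `ψ_σ(x) = σ⁻¹ ψ(x/σ)`. -/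
noncomputable def gaussKs (σ x : ℝ) : ℝ := σ⁻¹ * gaussK (x / σ)

/-- Convolution with `ψ_σ` : `K_σ f`. -/
noncomputable def convK (σ : ℝ) (f : ℝ → ℝ) : ℝ → ℝ := fun x => ∫ u, f u * gaussKs σ (x - u)

/-- `i`-fold application of `K_σ`, with `K_σ^0 f = f`. -/
noncomputable def convKiter (σ : ℝ) (f : ℝ → ℝ) : ℕ → ℝ → ℝ
  | 0 => f
  | i + 1 => convK σ (convKiter σ f i)

/-- The iterates `f_0 = f`, `f_{j+1} = f - (K_σ f_j - f_j)`. -/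
noncomputable def iterF (σ : ℝ) (f : ℝ → ℝ) : ℕ → ℝ → ℝ
  | 0 => f
  | j + 1 => fun x => f x - (convK σ (iterF σ f j) x - iterF σ f j x)

/-- `J_{σ,k} = {x : f_k(x) > f(x)/2}`. -/
def Jset (σ : ℝ) (f : ℝ → ℝ) (k : ℕ) : Set ℝ := {x | f x / 2 < iterF σ f k x}

-- `g_k = f_k 1_{J_{σ,k}} + (f/2) 1_{J_{σ,k}^c}`
open Classical in
noncomputable def gFun (σ : ℝ) (f : ℝ → ℝ) (k : ℕ) : ℝ → ℝ :=
  fun x => if x ∈ Jset σ f k then iterF σ f k x else f x / 2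

/-- `h_k = g_k / ∫ g_k`. -/
noncomputable def hFun (σ : ℝ) (f : ℝ → ℝ) (k : ℕ) : ℝ → ℝ :=
  fun x => gFun σ f k x / ∫ u, gFun σ f k u

open Finset Real

lemma sum_choose_succ_mul_neg_one_pow_step {R : Type*} [CommRing R] (a : ℕ → R) (k : ℕ) :
    a 0 - (∑ i ∈ range (k + 1), ((k + 1).choose (i + 1) : R) * (-1) ^ i * a (i + 1) -
        ∑ i ∈ range (k + 1), ((k + 1).choose (i + 1) : R) * (-1) ^ i * a i) =
      ∑ i ∈ range (k + 2), ((k + 2).choose (i + 1) : R) * (-1) ^ i * a i := by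
  have hpascal : ∑ i ∈ range (k + 2), ((k + 2).choose (i + 1) : R) * (-1) ^ i * a i =
      ∑ i ∈ range (k + 2), ((k + 1).choose i : R) * (-1) ^ i * a i +
        ∑ i ∈ range (k + 2), ((k + 1).choose (i + 1) : R) * (-1) ^ i * a i := by
    rw [← sum_add_distrib]
    refine sum_congr rfl fun i _ => ?_
    rw [Nat.choose_succ_succ (k + 1) i, Nat.cast_add, add_mul, add_mul]
  rw [hpascal, sum_range_succ' _ (k + 1), sum_range_succ _ (k + 1)]
  simp only [Nat.choose_zero_right, Nat.choose_succ_self, Nat.cast_one, Nat.cast_zero, pow_zero,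
    pow_succ, zero_mul, one_mul, mul_one, neg_mul, mul_neg, sum_neg_distrib]
  ring

section Gaussian

lemma gaussK_nonneg (x : ℝ) : 0 ≤ gaussK x := by
  unfold gaussK
  positivity

lemma gaussK_le_inv_sqrt_pi (x : ℝ) : gaussK x ≤ (√π)⁻¹ := by
  unfold gaussK
  refine mul_le_of_le_one_right (by positivity) (Real.exp_le_one_iff.2 ?_)
  nlinarith [sq_nonneg x]

lemma integral_gaussK : ∫ x, gaussK x = 1 := by
  have h := integral_gaussian 1
  simp only [neg_mul, one_mul, div_one] at h
  simp only [gaussK, integral_const_mul, h]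
  exact inv_mul_cancel₀ (Real.sqrt_ne_zero'.2 Real.pi_pos)

lemma integrable_gaussK : Integrable gaussK := by
  unfold gaussK
  simpa using (integrable_exp_neg_mul_sq one_pos).const_mul (√π)⁻¹

variable {σ : ℝ}

lemma gaussKs_nonneg (hσ : 0 < σ) (x : ℝ) : 0 ≤ gaussKs σ x :=
  mul_nonneg (inv_nonneg.2 hσ.le) (gaussK_nonneg _)

lemma continuous_gaussKs (σ : ℝ) : Continuous (gaussKs σ) := by
  unfold gaussKs gaussK
  fun_prop

lemma integrable_gaussKs (hσ : 0 < σ) : Integrable (gaussKs σ) :=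
  (integrable_gaussK.comp_div hσ.ne').const_mul σ⁻¹

lemma integral_gaussKs (hσ : 0 < σ) : ∫ x, gaussKs σ x = 1 := by
  unfold gaussKs
  rw [integral_const_mul, Measure.integral_comp_div gaussK σ, integral_gaussK,
    abs_of_pos hσ, smul_eq_mul, mul_one, inv_mul_cancel₀ hσ.ne']

lemma bddAbove_range_gaussKs (hσ : 0 < σ) : BddAbove (Set.range (gaussKs σ)) :=
  ⟨σ⁻¹ * (√π)⁻¹, Set.forall_mem_range.2 fun _ =>
    mul_le_mul_of_nonneg_left (gaussK_le_inv_sqrt_pi _) (inv_nonneg.2 hσ.le)⟩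

end Gaussian

section Convolution

variable {σ : ℝ}

lemma convK_eq_convolution (σ : ℝ) (g : ℝ → ℝ) :
    convK σ g = g ⋆[ContinuousLinearMap.mul ℝ ℝ] gaussKs σ := rfl

lemma integrable_convK (hσ : 0 < σ) {g : ℝ → ℝ} (hg : Integrable g) : Integrable (convK σ g) := by
  rw [convK_eq_convolution]
  exact hg.integrable_convolution _ (integrable_gaussKs hσ)

lemma integral_convK (hσ : 0 < σ) {g : ℝ → ℝ} (hg : Integrable g) :
    ∫ x, convK σ g x = ∫ x, g x := by
  rw [convK_eq_convolution, integral_convolution _ hg (integrable_gaussKs hσ),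
    integral_gaussKs hσ]
  simp

lemma integrable_mul_gaussKs_sub (hσ : 0 < σ) {g : ℝ → ℝ} (hg : Integrable g) (x : ℝ) :
    Integrable fun u => g u * gaussKs σ (x - u) := by
  obtain ⟨C, hC⟩ := bddAbove_range_gaussKs hσ
  refine hg.mul_bdd (c := C)
    ((continuous_gaussKs σ).comp (continuous_sub_left x)).aestronglyMeasurable
    (Filter.Eventually.of_forall fun u => ?_)
  rw [Real.norm_of_nonneg (gaussKs_nonneg hσ _)]
  exact hC (Set.mem_range_self _)

lemma convK_const_mul (σ c : ℝ) (g : ℝ → ℝ) :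
    convK σ (fun u => c * g u) = fun x => c * convK σ g x := by
  funext x
  simp only [convK, mul_assoc, integral_const_mul]

lemma convK_finset_sum (hσ : 0 < σ) {ι : Type*} (s : Finset ι) {g : ι → ℝ → ℝ}
    (hg : ∀ i ∈ s, Integrable (g i)) (x : ℝ) :
    convK σ (fun u => ∑ i ∈ s, g i u) x = ∑ i ∈ s, convK σ (g i) x := by
  simp only [convK, sum_mul]
  exact integral_finsetSum s fun i hi => integrable_mul_gaussKs_sub hσ (hg i hi) x

lemma convK_nonneg (hσ : 0 < σ) {g : ℝ → ℝ} (hg : ∀ u, 0 ≤ g u) (x : ℝ) : 0 ≤ convK σ g x :=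
  integral_nonneg fun u => mul_nonneg (hg u) (gaussKs_nonneg hσ _)

lemma abs_convK_le (hσ : 0 < σ) {g : ℝ → ℝ} {B : ℝ} (hB : ∀ u, |g u| ≤ B) (x : ℝ) :
    |convK σ g x| ≤ B :=
  calc |convK σ g x| ≤ ∫ u, |g u * gaussKs σ (x - u)| := abs_integral_le_integral_abs
    _ ≤ ∫ u, B * gaussKs σ (x - u) := by
      refine integral_mono_of_nonneg (Filter.Eventually.of_forall fun u => abs_nonneg _)
        (((integrable_gaussKs hσ).comp_sub_left x).const_mul B)
        (Filter.Eventually.of_forall fun u => ?_)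
      dsimp only
      rw [abs_mul, abs_of_nonneg (gaussKs_nonneg hσ _)]
      exact mul_le_mul_of_nonneg_right (hB u) (gaussKs_nonneg hσ _)
    _ = B := by
      rw [integral_const_mul, integral_sub_left_eq_self (gaussKs σ) volume x,
        integral_gaussKs hσ, mul_one]

end Convolution

section Iterates

variable {σ : ℝ} {f : ℝ → ℝ}

lemma integrable_convKiter (hσ : 0 < σ) (hf : Integrable f) (i : ℕ) :
    Integrable (convKiter σ f i) := by
  induction i with
  | zero => exact hf
  | succ i ih => exact integrable_convK hσ ih

lemma integrable_iterF (hσ : 0 < σ) (hf : Integrable f) (k : ℕ) : Integrable (iterF σ f k) := by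
  induction k with
  | zero => exact hf
  | succ k ih => exact hf.sub ((integrable_convK hσ ih).sub ih)

lemma iterF_eq_sum (hσ : 0 < σ) (hf : Integrable f) (k : ℕ) :
    iterF σ f k = fun x => ∑ i ∈ range (k + 1),
      ((k + 1).choose (i + 1) : ℝ) * (-1) ^ i * convKiter σ f i x := by
  induction k with
  | zero => funext x; simp [iterF, convKiter]
  | succ k ih =>
    have hconv : ∀ x, convK σ (iterF σ f k) x = ∑ i ∈ range (k + 1),
        ((k + 1).choose (i + 1) : ℝ) * (-1) ^ i * convKiter σ f (i + 1) x := fun x => by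
      rw [ih, convK_finset_sum hσ _ (fun i _ => (integrable_convKiter hσ hf i).const_mul _) x]
      exact sum_congr rfl fun i _ => congrFun (convK_const_mul σ _ _) x
    funext x
    show f x - (convK σ (iterF σ f k) x - iterF σ f k x) = _
    rw [hconv, ih]
    exact sum_choose_succ_mul_neg_one_pow_step (convKiter σ f · x) k

lemma integral_iterF (hσ : 0 < σ) (hf : Integrable f) (k : ℕ) :
    ∫ x, iterF σ f k x = ∫ x, f x := by
  induction k with
  | zero => rfl
  | succ k ih =>
    have hk := integrable_iterF hσ hf k
    have hKk : Integrable fun x => convK σ (iterF σ f k) x - iterF σ f k x :=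
      (integrable_convK hσ hk).sub hk
    simp only [iterF]
    rw [integral_sub hf hKk, integral_sub (integrable_convK hσ hk) hk, integral_convK hσ hk]
    ring

lemma convKiter_mem_Icc (hσ : 0 < σ) {B : ℝ} (hf : ∀ x, f x ∈ Set.Icc 0 B) (i : ℕ) (x : ℝ) :
    convKiter σ f i x ∈ Set.Icc 0 B := by
  induction i generalizing x with
  | zero => exact hf x
  | succ i ih =>
    refine ⟨convK_nonneg hσ (fun u => (ih u).1) x, (le_abs_self _).trans ?_⟩
    exact abs_convK_le hσ (fun u => (abs_of_nonneg (ih u).1).trans_le (ih u).2) x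

lemma abs_iterF_le (hσ : 0 < σ) {B : ℝ} (hf : ∀ x, |f x| ≤ B) (k : ℕ) (x : ℝ) :
    |iterF σ f k x| ≤ (2 ^ (k + 1) - 1) * B := by
  induction k generalizing x with
  | zero => norm_num [iterF]; exact hf x
  | succ k ih =>
    calc |iterF σ f (k + 1) x|
        ≤ |f x| + (|convK σ (iterF σ f k) x| + |iterF σ f k x|) :=
          (abs_sub _ _).trans (by gcongr; exact abs_sub _ _)
      _ ≤ B + ((2 ^ (k + 1) - 1) * B + (2 ^ (k + 1) - 1) * B) := by
          gcongr
          exacts [hf x, abs_convK_le hσ ih x, ih x]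
      _ = (2 ^ (k + 1 + 1) - 1) * B := by ring

end Iterates

/-- Lemma 12: (1) `f_k = Σ_{i=0}^k C(k+1,i+1)(−1)^i K_σ^i f`;
(2) `∫ f_k = 1`; (3) if `f ≤ M ψ` then `K_σ^i f ≤ M/√π` and `|f_k| ≤ (2^{k+1}−1) M/√π`. -/
theorem stmt15 (f : ℝ → ℝ) (hf0 : ∀ x, 0 ≤ f x) (hfi : Integrable f)
    (hf1 : (∫ x, f x) = 1) (σ : ℝ) (hσ : 0 < σ) :
    (∀ k : ℕ, ∀ x : ℝ, iterF σ f k x =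
        ∑ i ∈ Finset.range (k + 1),
          ((k + 1).choose (i + 1) : ℝ) * (-1) ^ i * convKiter σ f i x) ∧
    (∀ k : ℕ, (∫ x, iterF σ f k x) = 1) ∧
    (∀ M : ℝ, 0 < M → (∀ x, f x ≤ M * gaussK x) →
      (∀ i : ℕ, ∀ x : ℝ, convKiter σ f i x ≤ M / Real.sqrt Real.pi) ∧
      (∀ k : ℕ, ∀ x : ℝ,
        |iterF σ f k x| ≤ (2 ^ (k + 1) - 1) * M / Real.sqrt Real.pi)) := by
  refine ⟨fun k x => congrFun (iterF_eq_sum hσ hfi k) x,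
    fun k => (integral_iterF hσ hfi k).trans hf1, fun M hM hfM => ?_⟩
  have hf_mem : ∀ x, f x ∈ Set.Icc 0 (M / √π) := fun x =>
    ⟨hf0 x, (hfM x).trans (mul_le_mul_of_nonneg_left (gaussK_le_inv_sqrt_pi x) hM.le)⟩
  refine ⟨fun i x => (convKiter_mem_Icc hσ hf_mem i x).2, fun k x => ?_⟩
  rw [mul_div_assoc]
  exact abs_iterF_le hσ (fun x => (abs_of_nonneg (hf_mem x).1).trans_le (hf_mem x).2) k x
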